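/- arXiv:math/0612745 — 2 statements merged into one kernel-verified Lean document; each statement's English description precedes it below -/
import Mathlib

section
/- Let m ≥ 2, let 0 < c ≤ 1 and C, R > 0, let ρ > 0, and let f be holomorphic on Ω(c,C)^m × D_R^n with mixed asymptotic expansion a. Set D := C / min(√ρ, 1). Then for every z ∈ Ω(c,D)^m the point (z₁,…,z_{m−1}, ρ·z_{m−1} + z_m) lies in Ω(c,C)^m, and the function g(z,y) := f(z₁,…,z_{m−1}, ρ·z_{m−1} + z_m, y) is holomorphic on Ω(c,D)^m × D_R^n and has mixed asymptotic expansion b, where b(α,β) := a(α₁,…,α_{m−2}, α_{m−1} − ρ·α_m, α_m, β) if α_{m−1} ≥ ρ·α_m, and b(α,β) := 0 otherwise. (In logarithmic coordinates this is the singular blow-up substitution x_m ↦ x_{m−1}^ρ·x_m, and b is the image of a under the singular blow-up homomorphism B^{ρ,0}_{m,m−1}.) -/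
noncomputable section
open scoped Classical

/-- Logarithmic model of a standard quadratic domain:
`Ω(c,C) = {z : Re z < log c - C·√|Im z|}`. -/
def SQD (c C : ℝ) : Set ℂ := {z : ℂ | z.re < Real.log c - C * Real.sqrt |z.im|}

/-- The cartesian power `Ω(c,C)^m`. -/
def QDom (c C : ℝ) (m : ℕ) : Set (Fin m → ℂ) := {z | ∀ i, z i ∈ SQD c C}

/-- Open disc `D_R` of radius `R` centred at `0`. -/
def Disc (R : ℝ) : Set ℂ := {w : ℂ | ‖w‖ < R}

/-- Polydisc `D_R^n`. -/
def PDisc (R : ℝ) (n : ℕ) : Set (Fin n → ℂ) := {y | ∀ j, y j ∈ Disc R}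

/-- The exponential monomial `exp⟨α,z⟩`. -/
def expMono {m : ℕ} (α : Fin m → ℝ) (z : Fin m → ℂ) : ℂ :=
  Complex.exp (∑ i, (α i : ℂ) * z i)

/-- Euclidean norm of `E(z) = (exp (Re z₁), …, exp (Re z_m))`. -/
def eNorm {m : ℕ} (z : Fin m → ℂ) : ℝ :=
  Real.sqrt (∑ i, Real.exp ((z i).re) ^ 2)

/-- A generalized power series with natural support: nonnegative exponents, and in each
coordinate the set of exponents below any bound is finite. -/
def NaturalSeries {m : ℕ} (a : (Fin m → ℝ) → ℂ) : Prop :=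
  (∀ α, a α ≠ 0 → ∀ i, 0 ≤ α i) ∧
  ∀ i : Fin m, ∀ R : ℝ, 0 < R → {r : ℝ | (∃ α, a α ≠ 0 ∧ α i = r) ∧ r ≤ R}.Finite

/-- `f` has asymptotic expansion `a` on `Ω(c,C)^m`: for every `ν > 0` there is a smaller
standard quadratic domain on which `f` minus the partial sum of weight `≤ ν` is
`o(‖E(z)‖^ν)` as `‖E(z)‖ → 0`. -/
def HasAsymExp {m : ℕ} (c C : ℝ) (f : (Fin m → ℂ) → ℂ) (a : (Fin m → ℝ) → ℂ) : Prop :=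
  NaturalSeries a ∧
  ∀ ν : ℝ, 0 < ν → ∃ c' C' : ℝ, 0 < c' ∧ 0 < C' ∧ SQD c' C' ⊆ SQD c C ∧
    ∃ F : Finset (Fin m → ℝ),
      (∀ α, α ∈ F ↔ a α ≠ 0 ∧ ∑ i, α i ≤ ν) ∧
      ∀ ε : ℝ, 0 < ε → ∃ δ : ℝ, 0 < δ ∧
        ∀ z ∈ QDom c' C' m, eNorm z < δ →
          ‖f z - ∑ α ∈ F, a α * expMono α z‖ ≤ ε * eNorm z ^ ν

/-- Euclidean norm of `(E(z),y) = (exp Re z₁, …, exp Re z_m, |y₁|, …, |y_n|)`. -/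
def mixedNorm {m n : ℕ} (z : Fin m → ℂ) (y : Fin n → ℂ) : ℝ :=
  Real.sqrt (∑ i, Real.exp ((z i).re) ^ 2 + ∑ j, ‖y j‖ ^ 2)

/-- A mixed series: coefficient function with natural support in the first `m`
(real-exponent) coordinates. -/
def MixedNatural {m n : ℕ} (a : (Fin m → ℝ) → (Fin n → ℕ) → ℂ) : Prop :=
  (∀ α β, a α β ≠ 0 → ∀ i, 0 ≤ α i) ∧
  ∀ i : Fin m, ∀ R : ℝ, 0 < R →
    {r : ℝ | (∃ α β, a α β ≠ 0 ∧ α i = r) ∧ r ≤ R}.Finite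

/-- `f` has mixed asymptotic expansion `a` on `Ω(c,C)^m × D_R^n`. -/
def HasMixedAsymExp {m n : ℕ} (c C R : ℝ)
    (f : ((Fin m → ℂ) × (Fin n → ℂ)) → ℂ)
    (a : (Fin m → ℝ) → (Fin n → ℕ) → ℂ) : Prop :=
  MixedNatural a ∧
  ∀ ν : ℝ, 0 < ν → ∃ c' C' R' : ℝ, 0 < c' ∧ 0 < C' ∧ 0 < R' ∧ R' ≤ R ∧
    SQD c' C' ⊆ SQD c C ∧
    ∃ F : Finset ((Fin m → ℝ) × (Fin n → ℕ)),
      (∀ p, p ∈ F ↔ a p.1 p.2 ≠ 0 ∧ (∑ i, p.1 i) + (∑ j, (p.2 j : ℝ)) ≤ ν) ∧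
      ∀ ε : ℝ, 0 < ε → ∃ δ : ℝ, 0 < δ ∧
        ∀ z ∈ QDom c' C' m, ∀ y ∈ PDisc R' n, mixedNorm z y < δ →
          ‖f (z, y) - ∑ p ∈ F, a p.1 p.2 * expMono p.1 z * ∏ j, (y j) ^ (p.2 j)‖
            ≤ ε * mixedNorm z y ^ ν

/-- The singular blow-up substitution in logarithmic coordinates:
`z_m ↦ ρ·z_{m−1} + z_m` (0-based: last coordinate). -/
def sBlow (m : ℕ) (hm : 2 ≤ m) (ρ : ℝ) (z : Fin m → ℂ) : Fin m → ℂ :=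
  Function.update z ⟨m - 1, by omega⟩
    ((ρ : ℝ) * z ⟨m - 2, by omega⟩ + z ⟨m - 1, by omega⟩)

/-- The image of a mixed series under the singular blow-up homomorphism `B^{ρ,0}_{m,m−1}`. -/
def sBlowCoef (m n : ℕ) (hm : 2 ≤ m) (ρ : ℝ)
    (a : (Fin m → ℝ) → (Fin n → ℕ) → ℂ) : (Fin m → ℝ) → (Fin n → ℕ) → ℂ :=
  fun α β =>
    if ρ * α ⟨m - 1, by omega⟩ ≤ α ⟨m - 2, by omega⟩ then
      a (Function.update α ⟨m - 2, by omega⟩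
          (α ⟨m - 2, by omega⟩ - ρ * α ⟨m - 1, by omega⟩)) β
    else 0


/-!
In the coordinates `x = exp z` the substitution `z_l ↦ ρ z_k + z_l` is `x_l ↦ x_k^ρ x_l`, which
maps monomials to monomials: `exp ⟨α, shear z⟩ = exp ⟨shearExp α, z⟩`, where `shearExp` adds
`ρ α_l` to `α_k`. So the expansion of `f ∘ shear` is the push-forward of the expansion of `f`
along the injective map `shearExp`. Weights only grow, `|shearExp α| = |α| + ρ α_l`, and where
`Re z_k ≤ 0` the shear does not increase `‖(E(z), y)‖`. Hence the `o(‖(E(z),y)‖^ν)` remainder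
of `f` at the sheared point stays `o(‖(E(z),y)‖^ν)`, and so do the finitely many transported
terms of weight `≤ ν` whose image has weight `> ν`. The shear maps `Ω(c,D)^m` into `Ω(c,C)^m`
because `√|ρ b + b'| ≤ √ρ √|b| + √|b'|`.
-/

open Function Finset

lemma Real.sqrt_add_le_add_sqrt {x y : ℝ} (hx : 0 ≤ x) (hy : 0 ≤ y) : √(x + y) ≤ √x + √y :=
  Real.sqrt_le_iff.2 ⟨by positivity, by
    nlinarith [Real.sq_sqrt hx, Real.sq_sqrt hy, Real.sqrt_nonneg x, Real.sqrt_nonneg y]⟩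

lemma Real.sqrt_abs_mul_add_le {ρ : ℝ} (hρ : 0 ≤ ρ) (x y : ℝ) :
    √|ρ * x + y| ≤ √ρ * √|x| + √|y| :=
  calc √|ρ * x + y| ≤ √(ρ * |x| + |y|) := by
        gcongr
        simpa [abs_mul, abs_of_nonneg hρ] using abs_add_le (ρ * x) y
    _ ≤ √(ρ * |x|) + √|y| := Real.sqrt_add_le_add_sqrt (by positivity) (abs_nonneg y)
    _ = √ρ * √|x| + √|y| := by rw [Real.sqrt_mul hρ]

lemma sum_mul_update {ι R : Type*} [Fintype ι] [DecidableEq ι] [CommRing R]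
    (u x : ι → R) (k : ι) (v : R) :
    ∑ i, u i * update x k v i = ∑ i, u i * x i + u k * (v - x k) := by
  have : update x k v = x + Pi.single k (v - x k) := by
    ext i; rcases eq_or_ne i k with rfl | hi <;> simp [*]
  simp [this, mul_add, sum_add_distrib, Pi.single_apply]

section SQD

lemma SQD_subset_SQD_of_le {c C₁ C₂ : ℝ} (hC : C₂ ≤ C₁) : SQD c C₁ ⊆ SQD c C₂ :=
  fun z hz => by
    have : z.re < Real.log c - C₁ * √|z.im| := hz
    show z.re < Real.log c - C₂ * √|z.im|
    nlinarith [Real.sqrt_nonneg |z.im|]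

lemma SQD_subset_SQD {c₁ c₂ C₁ C₂ : ℝ} (hc₁ : 0 < c₁) (hc : c₁ ≤ c₂) (hC : C₂ ≤ C₁) :
    SQD c₁ C₁ ⊆ SQD c₂ C₂ := fun z hz => by
  have := Real.log_le_log hc₁ hc
  simp only [SQD, Set.mem_ofPred_eq] at *
  nlinarith [Real.sqrt_nonneg |z.im|]

lemma QDom_subset_QDom {m : ℕ} {c₁ c₂ C₁ C₂ : ℝ} (hc₁ : 0 < c₁) (hc : c₁ ≤ c₂)
    (hC : C₂ ≤ C₁) : QDom c₁ C₁ m ⊆ QDom c₂ C₂ m :=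
  fun _ hz i => SQD_subset_SQD hc₁ hc hC (hz i)

lemma re_neg_of_mem_SQD {c C : ℝ} {z : ℂ} (hc0 : 0 ≤ c) (hc1 : c ≤ 1) (hC : 0 ≤ C)
    (hz : z ∈ SQD c C) : z.re < 0 := by
  have := Real.log_nonpos hc0 hc1
  have : z.re < Real.log c - C * √|z.im| := hz
  nlinarith [Real.sqrt_nonneg |z.im|]

/-- `D = C / min (√ρ) 1` is chosen so that `C ≤ D` and `C √ρ ≤ ρ D`, which is what
`√|ρ x + y| ≤ √ρ √|x| + √|y|` requires; `c ≤ 1` disposes of the extra `ρ log c`. -/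
lemma mul_add_mem_SQD {c C ρ : ℝ} {u v : ℂ} (hc0 : 0 ≤ c) (hc1 : c ≤ 1) (hC : 0 ≤ C)
    (hρ : 0 < ρ) (hu : u ∈ SQD c (C / min √ρ 1)) (hv : v ∈ SQD c (C / min √ρ 1)) :
    ρ * u + v ∈ SQD c C := by
  set D := C / min √ρ 1
  have hμ : 0 < min √ρ 1 := lt_min (Real.sqrt_pos.2 hρ) one_pos
  have hCD : C ≤ D := le_div_self hC hμ (min_le_right _ _)
  have hCρD : C * √ρ ≤ ρ * D := by
    rw [mul_div_assoc', le_div_iff₀ hμ]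
    nlinarith [Real.mul_self_sqrt hρ.le,
      mul_le_mul_of_nonneg_left (min_le_left √ρ 1) (mul_nonneg hC (Real.sqrt_nonneg ρ))]
  have hlog := Real.log_nonpos hc0 hc1
  have hu' : u.re < Real.log c - D * √|u.im| := hu
  have hv' : v.re < Real.log c - D * √|v.im| := hv
  have hsqrt := mul_le_mul_of_nonneg_left (Real.sqrt_abs_mul_add_le hρ.le u.im v.im) hC
  show (ρ * u + v).re < Real.log c - C * √|(ρ * u + v).im|
  simp only [Complex.add_re, Complex.add_im, Complex.re_ofReal_mul, Complex.im_ofReal_mul]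
  nlinarith [Real.sqrt_nonneg |u.im|, Real.sqrt_nonneg |v.im|]

end SQD

section Shear

variable {m n : ℕ}

def shear (k l : Fin m) (ρ : ℝ) (z : Fin m → ℂ) : Fin m → ℂ :=
  update z l (ρ * z k + z l)

def shearExp (k l : Fin m) (ρ : ℝ) (α : Fin m → ℝ) : Fin m → ℝ :=
  update α k (α k + ρ * α l)

def shearCoef (k l : Fin m) (ρ : ℝ) (a : (Fin m → ℝ) → (Fin n → ℕ) → ℂ) :
    (Fin m → ℝ) → (Fin n → ℕ) → ℂ :=
  fun α β => if ρ * α l ≤ α k then a (update α k (α k - ρ * α l)) β else 0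

variable {k l : Fin m} {ρ : ℝ}

lemma differentiable_shear : Differentiable ℂ (shear k l ρ) := by
  refine differentiable_pi.2 fun i => ?_
  rcases eq_or_ne i l with rfl | hi
  · simp only [shear, update_self]; fun_prop
  · simp only [shear, update_of_ne hi]; fun_prop

lemma shear_mapsTo_QDom {c C : ℝ} (hc0 : 0 ≤ c) (hc1 : c ≤ 1) (hC : 0 ≤ C) (hρ : 0 < ρ) :
    Set.MapsTo (shear k l ρ) (QDom c (C / min √ρ 1) m) (QDom c C m) := fun z hz i => by
  rcases eq_or_ne i l with rfl | hi
  · simpa [shear] using mul_add_mem_SQD hc0 hc1 hC hρ (hz k) (hz i)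
  · rw [shear, update_of_ne hi]
    exact SQD_subset_SQD_of_le (le_div_self hC (lt_min (Real.sqrt_pos.2 hρ) one_pos)
      (min_le_right _ _)) (hz i)

lemma expMono_shear (α : Fin m → ℝ) (z : Fin m → ℂ) :
    expMono α (shear k l ρ z) = expMono (shearExp k l ρ α) z := by
  have hcast (i : Fin m) : ((shearExp k l ρ α i : ℝ) : ℂ) * z i =
      z i * update (fun i => (α i : ℂ)) k (α k + ρ * α l) i := by
    rcases eq_or_ne i k with rfl | hi <;> simp [shearExp, mul_comm, *]
  simp only [expMono, shear, hcast, sum_mul_update]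
  congr 1
  simp only [mul_comm (z _)]
  ring

lemma shearExp_apply_of_ne {i : Fin m} (hi : i ≠ k) (α : Fin m → ℝ) :
    shearExp k l ρ α i = α i := update_of_ne hi _ _

lemma sum_shearExp (α : Fin m → ℝ) : ∑ i, shearExp k l ρ α i = ∑ i, α i + ρ * α l := by
  have := sum_mul_update (fun _ => (1 : ℝ)) α k (α k + ρ * α l)
  simp only [one_mul] at this
  rw [shearExp, this]; ring

lemma shearExp_nonneg (hρ : 0 ≤ ρ) {α : Fin m → ℝ} (hα : ∀ i, 0 ≤ α i) (i : Fin m) :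
    0 ≤ shearExp k l ρ α i := by
  rcases eq_or_ne i k with rfl | hi
  · simp only [shearExp, update_self]; have := hα l; have := hα i; positivity
  · rw [shearExp_apply_of_ne hi]; exact hα i

lemma leftInverse_shearExp (hkl : k ≠ l) :
    LeftInverse (fun γ => update γ k (γ k - ρ * γ l)) (shearExp k l ρ) := fun α => by
  ext i; rcases eq_or_ne i k with rfl | hi <;> simp [shearExp, hkl.symm, *]

lemma rightInverse_shearExp (hkl : k ≠ l) :
    RightInverse (fun γ => update γ k (γ k - ρ * γ l)) (shearExp k l ρ) := fun γ => by
  ext i; rcases eq_or_ne i k with rfl | hi <;> simp [shearExp, hkl.symm, *]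

lemma shearExp_injective (hkl : k ≠ l) : Injective (shearExp k l ρ) :=
  (leftInverse_shearExp hkl).injective

lemma shearCoef_shearExp (hkl : k ≠ l) (a : (Fin m → ℝ) → (Fin n → ℕ) → ℂ)
    {α : Fin m → ℝ} (hα : 0 ≤ α k) (β : Fin n → ℕ) :
    shearCoef k l ρ a (shearExp k l ρ α) β = a α β := by
  have hl : shearExp k l ρ α l = α l := shearExp_apply_of_ne hkl.symm α
  have hcond : ρ * shearExp k l ρ α l ≤ shearExp k l ρ α k := by
    rw [hl, shearExp, update_self]; linarith
  rw [shearCoef, if_pos hcond]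
  exact congrArg (a · β) (leftInverse_shearExp hkl α)

lemma shearCoef_ne_zero_iff (hkl : k ≠ l) {a : (Fin m → ℝ) → (Fin n → ℕ) → ℂ}
    (ha : ∀ α β, a α β ≠ 0 → 0 ≤ α k) {γ : Fin m → ℝ} {β : Fin n → ℕ} :
    shearCoef k l ρ a γ β ≠ 0 ↔ ∃ α, a α β ≠ 0 ∧ shearExp k l ρ α = γ := by
  constructor
  · intro h
    by_cases hcond : ρ * γ l ≤ γ k
    · rw [shearCoef, if_pos hcond] at h
      exact ⟨_, h, rightInverse_shearExp hkl γ⟩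
    · simp [shearCoef, hcond] at h
  · rintro ⟨α, hα, rfl⟩
    rwa [shearCoef_shearExp hkl a (ha α β hα)]

end Shear

lemma mixedNatural_shearCoef {m n : ℕ} {k l : Fin m} {ρ : ℝ} (hkl : k ≠ l) (hρ : 0 < ρ)
    {a : (Fin m → ℝ) → (Fin n → ℕ) → ℂ} (ha : MixedNatural a) :
    MixedNatural (shearCoef k l ρ a) := by
  obtain ⟨hnn, hfin⟩ := ha
  have hsupp {γ β} (h : shearCoef k l ρ a γ β ≠ 0) :=
    (shearCoef_ne_zero_iff hkl (fun α β hα => hnn α β hα k)).1 h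
  refine ⟨fun γ β h => ?_, fun i R hR => ?_⟩
  · obtain ⟨α, hα, rfl⟩ := hsupp h
    exact shearExp_nonneg hρ.le (hnn α β hα)
  rcases eq_or_ne i k with rfl | hi
  · refine ((hfin i R hR).image2 (fun s t => s + ρ * t)
      (hfin l (R / ρ) (by positivity))).subset ?_
    rintro r ⟨⟨γ, β, h, rfl⟩, hr⟩
    obtain ⟨α, hα, rfl⟩ := hsupp h
    have hα0 := hnn α β hα
    simp only [shearExp, update_self] at hr ⊢
    refine ⟨α i, ⟨⟨α, β, hα, rfl⟩, ?_⟩, α l, ⟨⟨α, β, hα, rfl⟩, ?_⟩, rfl⟩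
    · nlinarith [hα0 l]
    · rw [le_div_iff₀ hρ]; nlinarith [hα0 i]
  · refine (hfin i R hR).subset ?_
    rintro r ⟨⟨γ, β, h, rfl⟩, hr⟩
    obtain ⟨α, hα, rfl⟩ := hsupp h
    rw [shearExp_apply_of_ne hi] at hr ⊢
    exact ⟨⟨α, β, hα, rfl⟩, hr⟩

section MixedNorm

variable {m n : ℕ} (z : Fin m → ℂ) (y : Fin n → ℂ)

lemma exp_re_le_mixedNorm (i : Fin m) : Real.exp (z i).re ≤ mixedNorm z y :=
  Real.le_sqrt_of_sq_le <| by
    have := single_le_sum (fun i _ => sq_nonneg (Real.exp (z i).re)) (mem_univ i)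
    have : 0 ≤ ∑ j, ‖y j‖ ^ 2 := sum_nonneg fun j _ => sq_nonneg _
    linarith

lemma norm_le_mixedNorm (j : Fin n) : ‖y j‖ ≤ mixedNorm z y :=
  Real.le_sqrt_of_sq_le <| by
    have := single_le_sum (fun j _ => sq_nonneg ‖y j‖) (mem_univ j)
    have : 0 ≤ ∑ i, Real.exp (z i).re ^ 2 := sum_nonneg fun i _ => sq_nonneg _
    linarith

lemma mixedNorm_pos [Nonempty (Fin m)] : 0 < mixedNorm z y :=
  (Real.exp_pos _).trans_le (exp_re_le_mixedNorm z y (Classical.arbitrary _))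

lemma norm_expMono_le [Nonempty (Fin m)] {α : Fin m → ℝ} (hα : ∀ i, 0 ≤ α i) :
    ‖expMono α z‖ ≤ mixedNorm z y ^ ∑ i, α i := by
  have hN := mixedNorm_pos z y
  rw [expMono, Complex.norm_exp, Real.rpow_def_of_pos hN, Complex.re_sum, mul_sum]
  refine Real.exp_le_exp.2 (sum_le_sum fun i _ => ?_)
  rw [Complex.re_ofReal_mul, mul_comm (Real.log _)]
  exact mul_le_mul_of_nonneg_left ((Real.le_log_iff_exp_le hN).2 (exp_re_le_mixedNorm z y i))
    (hα i)

lemma norm_prod_pow_le (β : Fin n → ℕ) :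
    ‖∏ j, y j ^ β j‖ ≤ mixedNorm z y ^ ∑ j, (β j : ℝ) := by
  rw [← Nat.cast_sum, Real.rpow_natCast, ← prod_pow_eq_pow_sum, norm_prod]
  exact prod_le_prod (fun j _ => norm_nonneg _) fun j _ =>
    norm_pow (y j) (β j) ▸ pow_le_pow_left₀ (norm_nonneg _) (norm_le_mixedNorm z y j) _

lemma mixedNorm_shear_le {k l : Fin m} {ρ : ℝ} (hρ : 0 ≤ ρ) (hz : (z k).re ≤ 0) :
    mixedNorm (shear k l ρ z) y ≤ mixedNorm z y := by
  refine Real.sqrt_le_sqrt (add_le_add_left (sum_le_sum fun i _ => ?_) _)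
  rcases eq_or_ne i l with rfl | hi
  · have : ρ * (z k).re + (z i).re ≤ (z i).re := by nlinarith
    simpa [shear] using pow_le_pow_left₀ (Real.exp_pos _).le (Real.exp_le_exp.2 this) 2
  · rw [shear, update_of_ne hi]

end MixedNorm

lemma exists_sum_mul_rpow_le {ι : Type*} (s : Finset ι) (b e : ι → ℝ)
    (he : ∀ i ∈ s, 0 < e i) {ε : ℝ} (hε : 0 < ε) :
    ∃ δ > 0, ∀ t, 0 ≤ t → t < δ → ∑ i ∈ s, b i * t ^ e i ≤ ε := by
  have hlim : Filter.Tendsto (fun t : ℝ => ∑ i ∈ s, b i * t ^ e i) (nhds 0) (nhds 0) := by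
    convert tendsto_finsetSum s fun i hi =>
      ((Real.continuousAt_rpow_const 0 (e i) (Or.inr (he i hi).le)).tendsto.const_mul
        (b i)).trans_eq (by rw [Real.zero_rpow (he i hi).ne', mul_zero])
    exact sum_const_zero.symm
  obtain ⟨δ, hδ, h⟩ := Metric.eventually_nhds_iff.1 (hlim.eventually_le_const hε)
  exact ⟨δ, hδ, fun t ht htδ => h (by rwa [Real.dist_eq, sub_zero, abs_of_nonneg ht])⟩

section Weight

variable {m n : ℕ}

def mixedWeight (p : (Fin m → ℝ) × (Fin n → ℕ)) : ℝ := (∑ i, p.1 i) + ∑ j, (p.2 j : ℝ)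

lemma mixedWeight_shearExp (k l : Fin m) (ρ : ℝ) (p : (Fin m → ℝ) × (Fin n → ℕ)) :
    mixedWeight (Prod.map (shearExp k l ρ) id p) = mixedWeight p + ρ * p.1 l := by
  simp only [mixedWeight, Prod.map_fst, Prod.map_snd, id, sum_shearExp]; ring

lemma norm_expMono_mul_prod_le [Nonempty (Fin m)] {p : (Fin m → ℝ) × (Fin n → ℕ)}
    (hp : ∀ i, 0 ≤ p.1 i) (z : Fin m → ℂ) (y : Fin n → ℂ) :
    ‖expMono p.1 z * ∏ j, y j ^ p.2 j‖ ≤ mixedNorm z y ^ mixedWeight p := by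
  rw [norm_mul, mixedWeight, Real.rpow_add (mixedNorm_pos z y)]
  exact mul_le_mul (norm_expMono_le z y hp) (norm_prod_pow_le z y p.2) (norm_nonneg _)
    (Real.rpow_nonneg (mixedNorm_pos z y).le _)

end Weight

section Expansion

variable {m n : ℕ} {k l : Fin m} {ρ : ℝ}

lemma sum_shearCoef_image (hkl : k ≠ l) (a : (Fin m → ℝ) → (Fin n → ℕ) → ℂ)
    {F : Finset ((Fin m → ℝ) × (Fin n → ℕ))} (hF : ∀ p ∈ F, 0 ≤ p.1 k)
    (z : Fin m → ℂ) (y : Fin n → ℂ) :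
    ∑ p ∈ F.image (Prod.map (shearExp k l ρ) id),
        shearCoef k l ρ a p.1 p.2 * expMono p.1 z * ∏ j, y j ^ p.2 j =
      ∑ p ∈ F, a p.1 p.2 * expMono p.1 (shear k l ρ z) * ∏ j, y j ^ p.2 j := by
  rw [sum_image fun p _ q _ h => Prod.map_injective.2 ⟨shearExp_injective hkl, injective_id⟩ h]
  refine sum_congr rfl fun p hp => ?_
  simp only [Prod.map_fst, Prod.map_snd, id, shearCoef_shearExp hkl a (hF p hp), expMono_shear]

lemma norm_sum_shear_le [Nonempty (Fin m)] (hρ : 0 ≤ ρ) (a : (Fin m → ℝ) → (Fin n → ℕ) → ℂ)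
    {G : Finset ((Fin m → ℝ) × (Fin n → ℕ))} (hG : ∀ p ∈ G, ∀ i, 0 ≤ p.1 i) (ν : ℝ)
    (z : Fin m → ℂ) (y : Fin n → ℂ) :
    ‖∑ p ∈ G, a p.1 p.2 * expMono p.1 (shear k l ρ z) * ∏ j, y j ^ p.2 j‖ ≤
      (∑ p ∈ G, ‖a p.1 p.2‖ *
        mixedNorm z y ^ (mixedWeight (Prod.map (shearExp k l ρ) id p) - ν)) *
        mixedNorm z y ^ ν := by
  rw [sum_mul]
  refine (norm_sum_le _ _).trans (sum_le_sum fun p hp => ?_)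
  rw [mul_assoc, norm_mul, mul_assoc, ← Real.rpow_add (mixedNorm_pos z y), sub_add_cancel,
    expMono_shear]
  exact mul_le_mul_of_nonneg_left (norm_expMono_mul_prod_le
    (p := Prod.map (shearExp k l ρ) id p) (shearExp_nonneg hρ (hG p hp)) z y) (norm_nonneg _)

lemma mem_image_shearExp_iff (hkl : k ≠ l) (hρ : 0 ≤ ρ) {a : (Fin m → ℝ) → (Fin n → ℕ) → ℂ}
    (hnn : ∀ α β, a α β ≠ 0 → ∀ i, 0 ≤ α i) {ν : ℝ} {F : Finset ((Fin m → ℝ) × (Fin n → ℕ))}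
    (hF : ∀ p, p ∈ F ↔ a p.1 p.2 ≠ 0 ∧ mixedWeight p ≤ ν) (p : (Fin m → ℝ) × (Fin n → ℕ)) :
    p ∈ (F.filter fun q => mixedWeight (Prod.map (shearExp k l ρ) id q) ≤ ν).image
        (Prod.map (shearExp k l ρ) id) ↔
      shearCoef k l ρ a p.1 p.2 ≠ 0 ∧ mixedWeight p ≤ ν := by
  simp only [mem_image, mem_filter, shearCoef_ne_zero_iff hkl (fun α β h => hnn α β h k)]
  constructor
  · rintro ⟨q, ⟨hqF, hqν⟩, rfl⟩
    exact ⟨⟨q.1, ((hF q).1 hqF).1, rfl⟩, hqν⟩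
  · rintro ⟨⟨α, hα, hαp⟩, hpν⟩
    have hq : Prod.map (shearExp k l ρ) id (α, p.2) = p := Prod.ext hαp rfl
    have hweight : mixedWeight (α, p.2) ≤ mixedWeight p := by
      rw [← congrArg mixedWeight hq, mixedWeight_shearExp]
      nlinarith [hnn α p.2 hα l]
    exact ⟨(α, p.2), ⟨(hF _).2 ⟨hα, hweight.trans hpν⟩, hq ▸ hpν⟩, hq⟩

/-- The terms of `F` whose image under `shearExp` has weight `> ν` move into the remainder. -/
lemma norm_sub_sum_shearCoef_le [Nonempty (Fin m)] (hkl : k ≠ l) (hρ : 0 ≤ ρ)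
    (g : ℂ) (a : (Fin m → ℝ) → (Fin n → ℕ) → ℂ) {F : Finset ((Fin m → ℝ) × (Fin n → ℕ))}
    (hF : ∀ p ∈ F, ∀ i, 0 ≤ p.1 i) (ν : ℝ) (z : Fin m → ℂ) (y : Fin n → ℂ) :
    ‖g - ∑ p ∈ (F.filter fun q => mixedWeight (Prod.map (shearExp k l ρ) id q) ≤ ν).image
        (Prod.map (shearExp k l ρ) id),
        shearCoef k l ρ a p.1 p.2 * expMono p.1 z * ∏ j, y j ^ p.2 j‖ ≤
      ‖g - ∑ p ∈ F, a p.1 p.2 * expMono p.1 (shear k l ρ z) * ∏ j, y j ^ p.2 j‖ +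
        (∑ p ∈ F.filter (fun q => ¬ mixedWeight (Prod.map (shearExp k l ρ) id q) ≤ ν),
          ‖a p.1 p.2‖ * mixedNorm z y ^ (mixedWeight (Prod.map (shearExp k l ρ) id p) - ν)) *
          mixedNorm z y ^ ν := by
  rw [sum_shearCoef_image hkl a fun p hp => hF p (mem_filter.1 hp).1 k]
  set P := fun q => mixedWeight (Prod.map (shearExp k l ρ) id q) ≤ ν
  set T := fun p : (Fin m → ℝ) × (Fin n → ℕ) =>
    a p.1 p.2 * expMono p.1 (shear k l ρ z) * ∏ j, y j ^ p.2 j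
  calc _ = ‖(g - ∑ p ∈ F, T p) + ∑ p ∈ F.filter (¬ P ·), T p‖ := by
        rw [← sum_filter_add_sum_filter_not F P T, sub_add_eq_sub_sub, sub_add_cancel]
    _ ≤ _ := (norm_add_le _ _).trans <| add_le_add_right
        (norm_sum_shear_le hρ a (fun p hp => hF p (mem_filter.1 hp).1) ν z y) _

end Expansion

theorem HasMixedAsymExp.comp_shear {m n : ℕ} {k l : Fin m} {ρ c C R : ℝ} (hkl : k ≠ l)
    (hρ : 0 < ρ) (hc0 : 0 < c) (hc1 : c ≤ 1) {f : ((Fin m → ℂ) × (Fin n → ℂ)) → ℂ}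
    {a : (Fin m → ℝ) → (Fin n → ℕ) → ℂ} (ha : HasMixedAsymExp c C R f a) :
    HasMixedAsymExp c (C / min √ρ 1) R (fun p => f (shear k l ρ p.1, p.2))
      (shearCoef k l ρ a) := by
  have : Nonempty (Fin m) := ⟨k⟩
  obtain ⟨hnat, hexp⟩ := ha
  refine ⟨mixedNatural_shearCoef hkl hρ hnat, fun ν hν => ?_⟩
  obtain ⟨c₁, C₁, R₁, hc₁, hC₁, hR₁, hR₁R, -, F, hF, hest⟩ := hexp ν hν
  have hFnn (p) (hp : p ∈ F) : ∀ i, 0 ≤ p.1 i := hnat.1 _ _ ((hF p).1 hp).1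
  have hc' : 0 < min c₁ c := lt_min hc₁ hc0
  have hc'1 : min c₁ c ≤ 1 := (min_le_right _ _).trans hc1
  refine ⟨min c₁ c, max C₁ C / min √ρ 1, R₁, hc', by positivity, hR₁, hR₁R,
    SQD_subset_SQD hc' (min_le_right _ _) (by gcongr; exact le_max_right _ _), _,
    mem_image_shearExp_iff hkl hρ.le hnat.1 hF, fun ε hε => ?_⟩
  obtain ⟨δ₁, hδ₁, hest₁⟩ := hest (ε / 2) (half_pos hε)
  obtain ⟨δ₂, hδ₂, htail⟩ := exists_sum_mul_rpow_le
    (F.filter fun p => ¬ mixedWeight (Prod.map (shearExp k l ρ) id p) ≤ ν) (fun p => ‖a p.1 p.2‖)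
    (fun p => mixedWeight (Prod.map (shearExp k l ρ) id p) - ν)
    (fun p hp => sub_pos.2 (not_le.1 (mem_filter.1 hp).2)) (half_pos hε)
  refine ⟨min δ₁ δ₂, lt_min hδ₁ hδ₂, fun z hz y hy hN => ?_⟩
  have hw : shear k l ρ z ∈ QDom c₁ C₁ m :=
    QDom_subset_QDom hc' (min_le_left _ _) (le_max_left _ _)
      (shear_mapsTo_QDom hc'.le hc'1 (by positivity) hρ hz)
  have hNw : mixedNorm (shear k l ρ z) y ≤ mixedNorm z y :=
    mixedNorm_shear_le z y hρ.le (re_neg_of_mem_SQD hc'.le hc'1 (by positivity) (hz k)).le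
  have hNwν : mixedNorm (shear k l ρ z) y ^ ν ≤ mixedNorm z y ^ ν :=
    Real.rpow_le_rpow (Real.sqrt_nonneg _) hNw hν.le
  have hN₀ := (mixedNorm_pos z y).le
  have hmain := hest₁ _ hw y hy (hNw.trans_lt (hN.trans_le (min_le_left _ _)))
  have hrest := mul_le_mul_of_nonneg_right (htail _ hN₀ (hN.trans_le (min_le_right _ _)))
    (Real.rpow_nonneg hN₀ ν)
  refine (norm_sub_sum_shearCoef_le hkl hρ.le (f (shear k l ρ z, y)) a hFnn ν z y).trans ?_
  linarith [mul_le_mul_of_nonneg_left hNwν (half_pos hε).le]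

theorem stmt13_general (m n : ℕ) (hm : 2 ≤ m) (c C R ρ : ℝ)
    (hc0 : 0 < c) (hc1 : c ≤ 1) (hC : 0 < C) (hρ : 0 < ρ)
    (f : ((Fin m → ℂ) × (Fin n → ℂ)) → ℂ)
    (hf : DifferentiableOn ℂ f ((QDom c C m) ×ˢ (PDisc R n)))
    (a : (Fin m → ℝ) → (Fin n → ℕ) → ℂ) (ha : HasMixedAsymExp c C R f a) :
    (∀ z ∈ QDom c (C / min (Real.sqrt ρ) 1) m, sBlow m hm ρ z ∈ QDom c C m) ∧
    DifferentiableOn ℂ (fun p : (Fin m → ℂ) × (Fin n → ℂ) => f (sBlow m hm ρ p.1, p.2))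
      ((QDom c (C / min (Real.sqrt ρ) 1) m) ×ˢ (PDisc R n)) ∧
    HasMixedAsymExp c (C / min (Real.sqrt ρ) 1) R
      (fun p => f (sBlow m hm ρ p.1, p.2)) (sBlowCoef m n hm ρ a) := by
  have hkl : (⟨m - 2, by omega⟩ : Fin m) ≠ ⟨m - 1, by omega⟩ :=
    Fin.ne_of_val_ne (by dsimp only; omega)
  have hmaps : Set.MapsTo (sBlow m hm ρ) (QDom c (C / min √ρ 1) m) (QDom c C m) :=
    shear_mapsTo_QDom hc0.le hc1 hC.le hρ
  refine ⟨hmaps, ?_, ha.comp_shear hkl hρ hc0 hc1⟩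
  exact hf.comp ((differentiable_shear.comp differentiable_fst).prodMk
    differentiable_snd).differentiableOn fun p hp => ⟨hmaps hp.1, hp.2⟩

/-- The singular blow-up substitution `x_m ↦ x_{m−1}^ρ·x_m` (in
logarithmic coordinates `z_m ↦ ρ z_{m−1} + z_m`) maps `Ω(c,D)^m` into `Ω(c,C)^m` with
`D = C/min(√ρ,1)`, and transforms a function with mixed asymptotic expansion `a` into one
with mixed asymptotic expansion `B^{ρ,0}_{m,m−1}(a)`. -/
theorem stmt13 (m n : ℕ) (hm : 2 ≤ m) (c C R ρ : ℝ)
    (hc0 : 0 < c) (hc1 : c ≤ 1) (hC : 0 < C) (hR : 0 < R) (hρ : 0 < ρ)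
    (f : ((Fin m → ℂ) × (Fin n → ℂ)) → ℂ)
    (hf : DifferentiableOn ℂ f ((QDom c C m) ×ˢ (PDisc R n)))
    (a : (Fin m → ℝ) → (Fin n → ℕ) → ℂ) (ha : HasMixedAsymExp c C R f a) :
    (∀ z ∈ QDom c (C / min (Real.sqrt ρ) 1) m, sBlow m hm ρ z ∈ QDom c C m) ∧
    DifferentiableOn ℂ (fun p : (Fin m → ℂ) × (Fin n → ℂ) => f (sBlow m hm ρ p.1, p.2))
      ((QDom c (C / min (Real.sqrt ρ) 1) m) ×ˢ (PDisc R n)) ∧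
    HasMixedAsymExp c (C / min (Real.sqrt ρ) 1) R
      (fun p => f (sBlow m hm ρ p.1, p.2)) (sBlowCoef m n hm ρ a) :=
  stmt13_general m n hm c C R ρ hc0 hc1 hC hρ f hf a ha
end
end

section
/- Let f be holomorphic on Ω(c,C)^m with asymptotic expansion a, and suppose a(α) ∈ ℝ for every α ∈ [0,∞)^m. Then f(conj(z₁), …, conj(z_m)) = conj(f(z)) for all z ∈ Ω(c,C)^m (note that Ω(c,C) is stable under complex conjugation); in particular f(x) ∈ ℝ for every real point x ∈ Ω(c,C)^m ∩ ℝ^m. -/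
noncomputable section
open scoped Classical

/-!
The reflection `z ↦ conj (f (conj z))` is holomorphic on `Ω(c,C)^m` and, the coefficients being
real, has the same asymptotic expansion as `f`; so their difference `h` is flat,
`h z = o(‖E z‖^ν)` for every `ν`. On the complex line `w ↦ z + (w, …, w)` the norm `‖E‖` scales
by `exp (Re w)`, so `h` restricts to a holomorphic function on a one-variable quadratic domain
that decays faster than every `exp (ν Re w)`. Composed with `ξ ↦ A - ξ - B √(ξ + 1)`, which maps
the closed right half-plane into a quadratic domain, it becomes a bounded function on the
half-plane decaying superexponentially along the real axis, hence zero by Phragmén–Lindelöf;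
the identity theorem then gives `h = 0`.
-/

open Complex Set Filter Topology Asymptotics

lemma sqrt_abs_add_le (a b : ℝ) : √|a + b| ≤ √|a| + √|b| := by
  rw [Real.sqrt_le_iff]
  refine ⟨by positivity, ?_⟩
  nlinarith [abs_add_le a b, Real.sq_sqrt (abs_nonneg a), Real.sq_sqrt (abs_nonneg b),
    mul_nonneg (Real.sqrt_nonneg |a|) (Real.sqrt_nonneg |b|)]

def quadDomain (A C : ℝ) : Set ℂ := {w | w.re < A - C * √|w.im|}

lemma SQD_eq_quadDomain (c C : ℝ) : SQD c C = quadDomain (Real.log c) C := rfl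

section quadDomain

variable {A B C C' : ℝ} {u w : ℂ}

lemma isOpen_quadDomain (A C : ℝ) : IsOpen (quadDomain A C) :=
  isOpen_lt continuous_re (by fun_prop)

lemma quadDomain_mono (hA : A ≤ B) (hC : C ≤ C') : quadDomain A C' ⊆ quadDomain B C := by
  intro w hw
  have : C * √|w.im| ≤ C' * √|w.im| := mul_le_mul_of_nonneg_right hC (Real.sqrt_nonneg _)
  simp only [quadDomain, mem_ofPred_eq] at hw ⊢
  linarith

@[simp]
lemma ofReal_mem_quadDomain {x : ℝ} : (x : ℂ) ∈ quadDomain A C ↔ x < A := by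
  simp [quadDomain]

lemma re_lt_of_mem_quadDomain (hC : 0 ≤ C) (hw : w ∈ quadDomain A C) : w.re < A := by
  have : 0 ≤ C * √|w.im| := by positivity
  simp only [quadDomain, mem_ofPred_eq] at hw
  linarith

lemma add_mem_quadDomain (hC : 0 ≤ C) (hu : u ∈ quadDomain A C) (hw : w ∈ quadDomain B C) :
    u + w ∈ quadDomain (A + B) C := by
  have := mul_le_mul_of_nonneg_left (sqrt_abs_add_le u.im w.im) hC
  simp only [quadDomain, mem_ofPred_eq, add_re, add_im] at hu hw ⊢
  linarith

lemma isPreconnected_quadDomain (A C : ℝ) : IsPreconnected (quadDomain A C) := by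
  have : quadDomain A C = (fun v => v - ((C * √|v.im| : ℝ) : ℂ)) '' {v | v.re < A} := by
    ext w
    simp only [quadDomain, mem_ofPred_eq, mem_image]
    constructor
    · intro hw
      exact ⟨w + ((C * √|w.im| : ℝ) : ℂ), by simp; linarith, by simp⟩
    · rintro ⟨v, hv, rfl⟩
      simp only [sub_re, sub_im, ofReal_re, ofReal_im, sub_zero]
      linarith
  rw [this]
  exact (convex_halfSpace_re_lt A).isPreconnected.image _ (by fun_prop)

end quadDomain

def halfPlaneChart (A B : ℝ) (ξ : ℂ) : ℂ := A - ξ - B * (ξ + 1) ^ (2⁻¹ : ℂ)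

section halfPlaneChart

variable {A B C : ℝ} {ξ : ℂ}

lemma differentiableAt_halfPlaneChart (hξ : 0 ≤ ξ.re) :
    DifferentiableAt ℂ (halfPlaneChart A B) ξ := by
  have : ξ + 1 ∈ slitPlane := Or.inl (by simp; linarith)
  unfold halfPlaneChart
  fun_prop (disch := exact this)

lemma halfPlaneChart_ofReal {t : ℝ} (ht : 0 ≤ t) :
    halfPlaneChart A B t = ((A - t - B * √(t + 1) : ℝ) : ℂ) := by
  have h : ((t : ℂ) + 1) ^ (2⁻¹ : ℂ) = ((√(t + 1) : ℝ) : ℂ) := by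
    rw [Real.sqrt_eq_rpow, ofReal_cpow (by linarith)]
    push_cast
    ring_nf
  simp [halfPlaneChart, h]

lemma halfPlaneChart_ofReal_ne (hB : 0 ≤ B) {t : ℝ} (ht : 0 < t) :
    halfPlaneChart A B t ≠ halfPlaneChart A B (0 : ℝ) := by
  rw [halfPlaneChart_ofReal ht.le, halfPlaneChart_ofReal le_rfl, Ne, ofReal_inj]
  have : √(0 + 1) ≤ √(t + 1) := Real.sqrt_le_sqrt (by linarith)
  nlinarith [mul_le_mul_of_nonneg_left this hB]

lemma re_halfPlaneChart_ofReal_le (hB : 0 ≤ B) {t : ℝ} (ht : 0 ≤ t) :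
    (halfPlaneChart A B t).re ≤ A - t := by
  rw [halfPlaneChart_ofReal ht, ofReal_re]
  nlinarith [mul_nonneg hB (Real.sqrt_nonneg (t + 1))]

lemma isBigO_exp_comp_halfPlaneChart {H : ℂ → ℂ} {A' C' ν : ℝ} (hB : 0 ≤ B) (hν : 0 ≤ ν)
    (hH : H =O[𝓟 (quadDomain A' C')] fun w => Real.exp (ν * w.re)) :
    (fun x : ℝ => H (halfPlaneChart A B x)) =O[atTop] fun x => Real.exp (-(ν * x)) := by
  have hmem : ∀ᶠ x : ℝ in atTop, halfPlaneChart A B x ∈ quadDomain A' C' := by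
    filter_upwards [eventually_ge_atTop 0, eventually_gt_atTop (A - A')] with x hx hxA
    rw [halfPlaneChart_ofReal hx, ofReal_mem_quadDomain]
    nlinarith [mul_nonneg hB (Real.sqrt_nonneg (x + 1))]
  refine (hH.comp_tendsto (tendsto_principal.2 hmem)).trans
    (IsBigO.of_bound (Real.exp (ν * A)) ?_)
  filter_upwards [eventually_ge_atTop 0] with x hx
  simp only [Function.comp_apply, Real.norm_eq_abs, Real.abs_exp, ← Real.exp_add]
  exact Real.exp_le_exp.2
    (by nlinarith [mul_le_mul_of_nonneg_left (re_halfPlaneChart_ofReal_le (A := A) hB hx) hν])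

-- `Re √(ξ + 1) ≥ √‖ξ + 1‖ / 2` while `|Im| ≤ (2C + 3)² ‖ξ + 1‖`; the choice `√B = 2C + 2` makes
-- `B Re √(ξ + 1)` dominate `C √|Im|`.
lemma halfPlaneChart_mem_quadDomain (hC : 0 ≤ C) (hξ : 0 ≤ ξ.re) :
    halfPlaneChart (A - 1) ((2 * C + 2) ^ 2) ξ ∈ quadDomain A C := by
  set ζ := ξ + 1
  set s := ζ ^ (2⁻¹ : ℂ)
  set ρ := ‖ζ‖
  have hζ : 1 ≤ ζ.re := by simp [ζ]; linarith
  have hρ : 1 ≤ ρ := hζ.trans (re_le_norm ζ)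
  have hs_re : √ρ / 2 ≤ s.re := by
    rw [cpow_inv_two_re, Real.le_sqrt (by positivity) (by positivity), div_pow,
      Real.sq_sqrt (by positivity)]
    linarith
  have hs_im : |s.im| ≤ ρ := by
    rw [abs_cpow_inv_two_im]
    calc √((ρ - ζ.re) / 2) ≤ √ρ := Real.sqrt_le_sqrt (by linarith)
      _ ≤ ρ := by rw [Real.sqrt_le_left]  <;> nlinarith
  have hξ_im : |ξ.im| ≤ ρ := by simpa [ζ] using abs_im_le_norm ζ
  have him : |-ξ.im - (2 * C + 2) ^ 2 * s.im| ≤ (2 * C + 3) ^ 2 * ρ := by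
    calc |-ξ.im - (2 * C + 2) ^ 2 * s.im| ≤ |ξ.im| + (2 * C + 2) ^ 2 * |s.im| := by
          refine (abs_sub _ _).trans ?_
          rw [abs_neg, abs_mul, abs_of_nonneg (sq_nonneg (2 * C + 2))]
      _ ≤ (2 * C + 3) ^ 2 * ρ := by nlinarith
  have hsqrt : √|-ξ.im - (2 * C + 2) ^ 2 * s.im| ≤ (2 * C + 3) * √ρ := by
    calc _ ≤ √((2 * C + 3) ^ 2 * ρ) := Real.sqrt_le_sqrt him
      _ = (2 * C + 3) * √ρ := by rw [Real.sqrt_mul (by positivity), Real.sqrt_sq (by positivity)]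
  have hψ_re : (halfPlaneChart (A - 1) ((2 * C + 2) ^ 2) ξ).re
      = A - 1 - ξ.re - (2 * C + 2) ^ 2 * s.re := by
    simp only [halfPlaneChart, sub_re, ofReal_re, re_ofReal_mul, s, ζ]
  have hψ_im : (halfPlaneChart (A - 1) ((2 * C + 2) ^ 2) ξ).im
      = -ξ.im - (2 * C + 2) ^ 2 * s.im := by
    simp only [halfPlaneChart, sub_im, ofReal_im, im_ofReal_mul, s, ζ, zero_sub]
  rw [quadDomain, mem_ofPred_eq, hψ_re, hψ_im]
  nlinarith [mul_le_mul_of_nonneg_left hsqrt hC, Real.sqrt_nonneg ρ]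

end halfPlaneChart

lemma eqOn_zero_of_isBigO_one_of_forall_isBigO_exp {G : ℂ → ℂ}
    (hd : DifferentiableOn ℂ G {ξ | 0 ≤ ξ.re})
    (hbdd : G =O[𝓟 {ξ | 0 ≤ ξ.re}] (1 : ℂ → ℝ))
    (hdecay : ∀ ν > 0, (fun x : ℝ => G x) =O[atTop] fun x => Real.exp (-(ν * x))) :
    EqOn G 0 {ξ | 0 ≤ ξ.re} := by
  have hopen : {ξ : ℂ | 0 < ξ.re} ⊆ {ξ | 0 ≤ ξ.re} := fun ξ (hξ : 0 < ξ.re) => hξ.le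
  obtain ⟨M, hM⟩ := isBigO_principal.1 hbdd
  refine PhragmenLindelof.eq_zero_on_right_half_plane_of_superexponential_decay
    ⟨hd.mono hopen, by rw [closure_setOfPred_lt_re]; exact hd.continuousOn⟩
    ⟨1, one_lt_two, 0, ?_⟩ (fun n => ?_) ⟨M, fun x => by simpa using hM (x * I) (by simp)⟩
  · exact ((hbdd.mono (principal_mono.2 hopen)).mono inf_le_right).trans
      (isBigO_of_le _ fun z => by simp)
  · have h := (isBigO_refl (fun x => Real.exp x ^ n) atTop).mul
      (hdecay (n + 1) (by positivity)).norm_left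
    refine h.trans_tendsto ?_
    convert Real.tendsto_exp_neg_atTop_nhds_zero using 2 with x
    rw [← Real.exp_nat_mul, ← Real.exp_add]
    ring_nf

lemma AnalyticOnNhd.eqOn_zero_of_eq_zero_along {H : ℂ → ℂ} {U : Set ℂ} {φ : ℝ → ℂ} {t₀ : ℝ}
    (hH : AnalyticOnNhd ℂ H U) (hU : IsPreconnected U) (hφU : φ t₀ ∈ U)
    (hφ : ContinuousAt φ t₀) (hφne : ∀ t > t₀, φ t ≠ φ t₀) (hzero : ∀ t > t₀, H (φ t) = 0) :
    EqOn H 0 U := by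
  have htend : Tendsto φ (𝓝[>] t₀) (𝓝[≠] φ t₀) :=
    tendsto_nhdsWithin_of_tendsto_nhds_of_eventually_within _
      (hφ.tendsto.mono_left nhdsWithin_le_nhds) (eventually_nhdsWithin_of_forall (s := Ioi t₀) hφne)
  exact hH.eqOn_zero_of_preconnected_of_frequently_eq_zero hU hφU
    (htend.frequently (eventually_nhdsWithin_of_forall (s := Ioi t₀) hzero).frequently)

theorem eqOn_zero_of_forall_isBigO_exp {H : ℂ → ℂ} {A C : ℝ} (hC : 0 ≤ C)
    (hH : DifferentiableOn ℂ H (quadDomain A C))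
    (hflat : ∀ ν > 0, ∃ A' C', H =O[𝓟 (quadDomain A' C')] fun w => Real.exp (ν * w.re)) :
    EqOn H 0 (quadDomain A C) := by
  obtain ⟨A₁, C₁, hH₁⟩ := hflat 1 one_pos
  set A₀ := min A A₁
  set C₀ := max C C₁
  have hC₀ : 0 ≤ C₀ := hC.trans (le_max_left _ _)
  set B := (2 * C₀ + 2) ^ 2
  set ψ := halfPlaneChart (A₀ - 1) B
  have hψ : ∀ ξ : ℂ, 0 ≤ ξ.re → ψ ξ ∈ quadDomain A₀ C₀ := fun ξ hξ =>
    halfPlaneChart_mem_quadDomain hC₀ hξ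
  have hsub : quadDomain A₀ C₀ ⊆ quadDomain A C :=
    quadDomain_mono (min_le_left _ _) (le_max_left _ _)
  have hG : DifferentiableOn ℂ (H ∘ ψ) {ξ | 0 ≤ ξ.re} := fun ξ hξ =>
    ((hH.differentiableAt ((isOpen_quadDomain A C).mem_nhds (hsub (hψ ξ hξ)))).comp ξ
      (differentiableAt_halfPlaneChart hξ)).differentiableWithinAt
  have hbdd : H =O[𝓟 (quadDomain A₀ C₀)] (1 : ℂ → ℝ) := by
    have hsub₁ : quadDomain A₀ C₀ ⊆ quadDomain A₁ C₁ :=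
      quadDomain_mono (min_le_right _ _) (le_max_right _ _)
    refine (hH₁.mono (principal_mono.2 hsub₁)).trans
      (isBigO_principal.2 ⟨Real.exp A₁, fun w hw => ?_⟩)
    have := re_lt_of_mem_quadDomain hC₀ hw
    simpa using (min_le_right A A₁).trans' this.le
  have hG0 := eqOn_zero_of_isBigO_one_of_forall_isBigO_exp hG
    (hbdd.comp_tendsto (tendsto_principal_principal.2 hψ)) fun ν hν => by
      obtain ⟨A', C', hH'⟩ := hflat ν hν
      exact isBigO_exp_comp_halfPlaneChart (sq_nonneg _) hν.le hH'
  refine (hH.analyticOnNhd (isOpen_quadDomain A C)).eqOn_zero_of_eq_zero_along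
    (isPreconnected_quadDomain A C) (hsub (hψ 0 (by simp))) (t₀ := 0)
    ((differentiableAt_halfPlaneChart (by simp)).continuousAt.comp continuous_ofReal.continuousAt)
    (fun t ht => halfPlaneChart_ofReal_ne (sq_nonneg _) ht) fun t ht => hG0 (by simpa using ht.le)

lemma DifferentiableOn.star_comp_star {E F : Type*} [NormedAddCommGroup E] [NormedSpace ℂ E]
    [StarAddMonoid E] [StarModule ℂ E] [ContinuousStar E] [NormedAddCommGroup F]
    [NormedSpace ℂ F] [StarAddMonoid F] [StarModule ℂ F] [ContinuousStar F] {f : E → F}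
    {s : Set E} (hs : IsOpen s) (hst : ∀ z ∈ s, star z ∈ s) (hf : DifferentiableOn ℂ f s) :
    DifferentiableOn ℂ (fun z => star (f (star z))) s := fun z hz => by
  have := (hf.differentiableAt (hs.mem_nhds (hst z hz))).star_star
  rw [star_star] at this
  exact this.differentiableWithinAt

section QDom

variable {m : ℕ} {c C B δ : ℝ} {z : Fin m → ℂ} {w : ℂ}

lemma isOpen_QDom (c C : ℝ) (m : ℕ) : IsOpen (QDom c C m) := by
  simp only [QDom, ofPred_forall]
  rw [SQD_eq_quadDomain]
  exact isOpen_iInter_of_finite fun i => (isOpen_quadDomain _ C).preimage (continuous_apply i)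

@[simp]
lemma star_mem_QDom : star z ∈ QDom c C m ↔ z ∈ QDom c C m := by
  simp [QDom, SQD]

@[simp]
lemma eNorm_star (z : Fin m → ℂ) : eNorm (star z) = eNorm z := by
  simp [eNorm]

lemma eNorm_nonneg (z : Fin m → ℂ) : 0 ≤ eNorm z := Real.sqrt_nonneg _

lemma eNorm_add_const (z : Fin m → ℂ) (w : ℂ) :
    eNorm (fun i => z i + w) = Real.exp w.re * eNorm z := by
  have : ∑ i, Real.exp (z i + w).re ^ 2 = Real.exp w.re ^ 2 * ∑ i, Real.exp (z i).re ^ 2 := by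
    rw [Finset.mul_sum]
    refine Finset.sum_congr rfl fun i _ => ?_
    rw [add_re, Real.exp_add]
    ring
  rw [eNorm, eNorm, this, Real.sqrt_mul (by positivity), Real.sqrt_sq (Real.exp_nonneg _)]

lemma add_const_mem_QDom (hC : 0 ≤ C) (hz : ∀ i, z i ∈ quadDomain (Real.log c - B) C)
    (hw : w ∈ quadDomain B C) : (fun i => z i + w) ∈ QDom c C m := fun i => by
  rw [SQD_eq_quadDomain, ← sub_add_cancel (Real.log c) B]
  exact add_mem_quadDomain hC (hz i) hw

lemma exists_pos_forall_mem_quadDomain (hz : z ∈ QDom c C m) :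
    ∃ B > 0, ∀ i, z i ∈ quadDomain (Real.log c - B) C := by
  have : ∀ᶠ B in 𝓝 (0 : ℝ), ∀ i, z i ∈ quadDomain (Real.log c - B) C := by
    refine eventually_all.2 fun i => ?_
    have hzi : (z i).re < Real.log c - C * √|(z i).im| := hz i
    filter_upwards [eventually_lt_nhds (sub_pos.2 hzi)] with B hB
    simp only [quadDomain, mem_ofPred_eq]
    linarith
  obtain ⟨B, hB, hB0⟩ := ((this.filter_mono nhdsWithin_le_nhds).and
    (self_mem_nhdsWithin : ∀ᶠ B in 𝓝[>] (0 : ℝ), B ∈ Ioi 0)).exists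
  exact ⟨B, hB0, hB⟩

lemma exists_forall_add_const_mem_QDom (z : Fin m → ℂ) (hC : 0 ≤ C) (hδ : 0 < δ) :
    ∃ A, ∀ w ∈ quadDomain A C,
      (fun i => z i + w) ∈ QDom c C m ∧ eNorm (fun i => z i + w) < δ := by
  have hmem : ∀ᶠ A in atBot, ∀ i, z i ∈ quadDomain (Real.log c - A) C := by
    refine eventually_all.2 fun i => ?_
    filter_upwards [eventually_lt_atBot (Real.log c - C * √|(z i).im| - (z i).re)] with A hA
    simp only [quadDomain, mem_ofPred_eq]
    linarith
  have hsmall : ∀ᶠ A in atBot, Real.exp A * eNorm z < δ := by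
    have : Tendsto (fun A => Real.exp A * eNorm z) atBot (𝓝 0) := by
      simpa using Real.tendsto_exp_atBot.mul_const (eNorm z)
    exact this.eventually_lt_const hδ
  obtain ⟨A, hA, hAδ⟩ := (hmem.and hsmall).exists
  refine ⟨A, fun w hw => ⟨add_const_mem_QDom hC hA hw, ?_⟩⟩
  rw [eNorm_add_const]
  calc Real.exp w.re * eNorm z ≤ Real.exp A * eNorm z :=
        mul_le_mul_of_nonneg_right (Real.exp_le_exp.2 (re_lt_of_mem_quadDomain hC hw).le)
          (eNorm_nonneg z)
    _ < δ := hAδ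

end QDom

-- A constant-free bound suffices: over all `ν` it is equivalent to `h z = o(‖E z‖^ν)`.
def IsFlat {m : ℕ} (h : (Fin m → ℂ) → ℂ) : Prop :=
  ∀ ν : ℝ, 0 < ν → ∃ c' C' δ : ℝ, 0 ≤ C' ∧ 0 < δ ∧
    ∀ z ∈ QDom c' C' m, eNorm z < δ → ‖h z‖ ≤ eNorm z ^ ν

theorem IsFlat.eqOn_zero {m : ℕ} {c C : ℝ} {h : (Fin m → ℂ) → ℂ} (hflat : IsFlat h)
    (hC : 0 ≤ C) (hh : DifferentiableOn ℂ h (QDom c C m)) : EqOn h 0 (QDom c C m) := by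
  intro z hz
  obtain ⟨B, hB, hzB⟩ := exists_pos_forall_mem_quadDomain hz
  have hH : DifferentiableOn ℂ (fun w => h fun i => z i + w) (quadDomain B C) :=
    hh.comp (by fun_prop) fun w hw => add_const_mem_QDom hC hzB hw
  have hHflat : ∀ ν > 0, ∃ A' C', (fun w => h fun i => z i + w) =O[𝓟 (quadDomain A' C')]
      fun w => Real.exp (ν * w.re) := by
    intro ν hν
    obtain ⟨c', C', δ, hC', hδ, hbound⟩ := hflat ν hν
    obtain ⟨A', hA'⟩ := exists_forall_add_const_mem_QDom (c := c') z hC' hδ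
    refine ⟨A', C', isBigO_principal.2 ⟨eNorm z ^ ν, fun w hw => ?_⟩⟩
    obtain ⟨hmem, hlt⟩ := hA' w hw
    calc ‖h fun i => z i + w‖ ≤ eNorm (fun i => z i + w) ^ ν := hbound _ hmem hlt
      _ = eNorm z ^ ν * ‖Real.exp (ν * w.re)‖ := by
        rw [eNorm_add_const, Real.mul_rpow (Real.exp_nonneg _) (eNorm_nonneg z),
          ← Real.exp_mul, Real.norm_eq_abs, Real.abs_exp]
        ring_nf
  have h0 : (0 : ℂ) ∈ quadDomain B C := by simp [quadDomain, hB]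
  simpa using eqOn_zero_of_forall_isBigO_exp hC hH hHflat h0

lemma star_sum_mul_expMono {m : ℕ} {a : (Fin m → ℝ) → ℂ} (hreal : ∀ α, (a α).im = 0)
    (F : Finset (Fin m → ℝ)) (z : Fin m → ℂ) :
    star (∑ α ∈ F, a α * expMono α z) = ∑ α ∈ F, a α * expMono α (star z) := by
  simp [star_sum, expMono, ← exp_conj, conj_eq_iff_im.2 (hreal _)]

lemma HasAsymExp.isFlat_sub_conj {m : ℕ} {c C : ℝ} {f : (Fin m → ℂ) → ℂ}
    {a : (Fin m → ℝ) → ℂ} (ha : HasAsymExp c C f a) (hreal : ∀ α, (a α).im = 0) :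
    IsFlat fun z => f z - star (f (star z)) := by
  intro ν hν
  obtain ⟨c', C', -, hC', -, F, -, hF⟩ := ha.2 ν hν
  obtain ⟨δ, hδ, hbound⟩ := hF (1 / 2) one_half_pos
  refine ⟨c', C', δ, hC'.le, hδ, fun z hz hzδ => ?_⟩
  set S := fun u => ∑ α ∈ F, a α * expMono α u
  have hz' := hbound z hz hzδ
  have hz'' := hbound (star z) (star_mem_QDom.2 hz) (by rwa [eNorm_star])
  rw [eNorm_star] at hz''
  calc ‖f z - star (f (star z))‖ = ‖(f z - S z) - star (f (star z) - S (star z))‖ := by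
        rw [star_sub, star_sum_mul_expMono hreal, star_star, sub_sub_sub_cancel_right]
    _ ≤ ‖f z - S z‖ + ‖f (star z) - S (star z)‖ := (norm_sub_le _ _).trans_eq (by rw [norm_star])
    _ ≤ eNorm z ^ ν := by linarith

theorem stmt16_general (m : ℕ) (c C : ℝ) (hC : 0 < C)
    (f : (Fin m → ℂ) → ℂ) (hf : DifferentiableOn ℂ f (QDom c C m))
    (a : (Fin m → ℝ) → ℂ) (ha : HasAsymExp c C f a)
    (hreal : ∀ α, (a α).im = 0) :
    (∀ z ∈ QDom c C m, f (fun i => starRingEnd ℂ (z i)) = starRingEnd ℂ (f z)) ∧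
    (∀ z ∈ QDom c C m, (∀ i, (z i).im = 0) → (f z).im = 0) := by
  have hf' := hf.star_comp_star (isOpen_QDom c C m) fun z hz => star_mem_QDom.2 hz
  have hzero := (ha.isFlat_sub_conj hreal).eqOn_zero hC.le (hf.sub hf')
  have hsymm : ∀ z ∈ QDom c C m, f (star z) = star (f z) := fun z hz => by
    simpa [sub_eq_zero] using hzero (star_mem_QDom.2 hz)
  refine ⟨hsymm, fun z hz hre => ?_⟩
  have hz_real : star z = z := funext fun i => conj_eq_iff_im.2 (hre i)
  have := hsymm z hz
  rw [hz_real] at this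
  exact conj_eq_iff_im.1 this.symm

/-- Reality: if `f` is holomorphic on `Ω(c,C)^m` with an asymptotic
expansion all of whose coefficients are real, then `f` commutes with complex conjugation;
in particular `f` is real-valued at real points of `Ω(c,C)^m`. -/
theorem stmt16 (m : ℕ) (c C : ℝ) (hc : 0 < c) (hC : 0 < C)
    (f : (Fin m → ℂ) → ℂ) (hf : DifferentiableOn ℂ f (QDom c C m))
    (a : (Fin m → ℝ) → ℂ) (ha : HasAsymExp c C f a)
    (hreal : ∀ α, (a α).im = 0) :
    (∀ z ∈ QDom c C m, f (fun i => starRingEnd ℂ (z i)) = starRingEnd ℂ (f z)) ∧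
    (∀ z ∈ QDom c C m, (∀ i, (z i).im = 0) → (f z).im = 0) :=
  stmt16_general m c C hC f hf a ha hreal
end
end
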